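/- arXiv:2204.05475 — 2 statements merged into one kernel-verified Lean document; each statement's English description precedes it below -/
import Mathlib

section
/- For every natural number B, any finite connected subgraph of the infinite grid whose number of vertices exceeds ⌈B(B+2)/16⌉ has at least B+1 escaping edges. In other words, the infinite grid satisfies the expansion property with polynomial bound L(B) = ⌈B(B+2)/16⌉. -/
/-- The infinite grid graph on ℤ × ℤ: two points are adjacent iff their ℓ¹-distance is 1. -/
def grid : SimpleGraph (ℤ × ℤ) where
  Adj p q := (p.1 - q.1).natAbs + (p.2 - q.2).natAbs = 1
  symm := by
    constructor
    intro p q h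
    omega
  loopless := by
    constructor
    intro p h
    simp at h


/-- The escaping edges from a vertex set `W` in a graph `G`, recorded as ordered pairs
`(a, b)` with `a ∈ W`, `a` adjacent to `b`, and `b` lying in an infinite connected
component of the subgraph induced on the complement of `W`. -/
def escaping {V : Type*} (G : SimpleGraph V) (W : Set V) : Set (V × V) :=
  {p | p.1 ∈ W ∧ G.Adj p.1 p.2 ∧ ∃ h : p.2 ∈ Wᶜ,
    {c : ↥(Wᶜ) | (G.induce Wᶜ).Reachable ⟨p.2, h⟩ c}.Infinite}

/-- The expansion property with bound `L`: every finite vertex set with at most `B`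
escaping edges has cardinality at most `L B`. -/
def ExpansionProp {V : Type*} (G : SimpleGraph V) (L : ℕ → ℕ) : Prop :=
  ∀ (B : ℕ) (W : Set V), W.Finite → (escaping G W).encard ≤ B → W.ncard ≤ L B

/-! Let `a` and `b` be the numbers of columns and rows of `ℤ × ℤ` meeting the finite set `W`;
then `|W| ≤ a * b`. On each such column (row), the topmost and bottommost (rightmost and
leftmost) points of `W` send an edge along an open ray that misses `W`, hence into the infinite
component of the complement. These `2 (a + b) ≥ 4 √|W|` edges are distinct, and
`|W| > ⌈B (B + 2) / 16⌉` forces `2 (a + b) ≥ B + 1`. -/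

open Finset

theorem mk_mem_escaping_of_injective_path {V : Type*} {G : SimpleGraph V} {W : Set V} {a : V}
    {f : ℕ → V} (ha : a ∈ W) (hadj : G.Adj a (f 0)) (hf : Function.Injective f)
    (hfW : ∀ n, f n ∉ W) (hstep : ∀ n, G.Adj (f n) (f (n + 1))) :
    (a, f 0) ∈ escaping G W := by
  refine ⟨ha, hadj, hfW 0, ?_⟩
  let g : ℕ → ↥Wᶜ := fun n => ⟨f n, hfW n⟩
  have hreach : ∀ n, (G.induce Wᶜ).Reachable (g 0) (g n) := by
    intro n
    induction n with
    | zero => rfl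
    | succ n ih => exact ih.trans (SimpleGraph.Adj.reachable (hstep n))
  exact Set.infinite_of_injective_forall_mem (fun m n h => hf (congrArg Subtype.val h)) hreach

theorem Finset.card_image_le_card_filter_forall_le_of_eq {α β γ : Type*} [DecidableEq β]
    [LinearOrder γ] (s : Finset α) (f : α → β) (g : α → γ) :
    #(s.image f) ≤ #(s.filter fun a => ∀ b ∈ s, f b = f a → g b ≤ g a) := by
  classical
  refine (card_le_card (t := (s.filter _).image f) fun y hy => ?_).trans card_image_le
  obtain ⟨x, hx, rfl⟩ := mem_image.1 hy
  obtain ⟨m, hm, hmax⟩ := exists_max_image (s.filter fun b => f b = f x) g ⟨x, by simp [hx]⟩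
  obtain ⟨hms, hmx⟩ := mem_filter.1 hm
  exact mem_image.2 ⟨m, mem_filter.2 ⟨hms, fun b hb hbm => hmax b (by simp [hb, hbm, hmx])⟩, hmx⟩

theorem Finset.card_le_card_image_mul_card_image {α β γ : Type*} [DecidableEq β] [DecidableEq γ]
    (s : Finset α) (f : α → β) (g : α → γ) (hfg : Set.InjOn (fun a => (f a, g a)) s) :
    #s ≤ #(s.image f) * #(s.image g) := by
  rw [← card_product]
  exact card_le_card_of_injOn _
    (fun a ha => mem_product.2 ⟨mem_image_of_mem f ha, mem_image_of_mem g ha⟩) hfg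

namespace grid

def dot (d p : ℤ × ℤ) : ℤ := d.1 * p.1 + d.2 * p.2

def orthProj (d p : ℤ × ℤ) : ℤ × ℤ := p - dot d p • d

/-- For a unit vector `d`, `orthProj d` is constant exactly on the lines parallel to `d`, so these
are the points of `s` farthest in direction `d` on their line. -/
def exposed (s : Finset (ℤ × ℤ)) (d : ℤ × ℤ) : Finset (ℤ × ℤ) :=
  s.filter fun p => ∀ q ∈ s, orthProj d q = orthProj d p → dot d q ≤ dot d p

variable {d : ℤ × ℤ}

theorem dot_self_eq_one (hd : d.1.natAbs + d.2.natAbs = 1) : dot d d = 1 := by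
  obtain ⟨d1, d2⟩ := d
  rcases (by omega : (d1 = 0 ∧ (d2 = 1 ∨ d2 = -1)) ∨ (d2 = 0 ∧ (d1 = 1 ∨ d1 = -1))) with
    ⟨rfl, rfl | rfl⟩ | ⟨rfl, rfl | rfl⟩ <;> rfl

theorem dot_add_smul (hd : dot d d = 1) (p : ℤ × ℤ) (t : ℤ) : dot d (p + t • d) = dot d p + t := by
  unfold dot at *
  simp only [Prod.fst_add, Prod.snd_add, Prod.smul_fst, Prod.smul_snd, smul_eq_mul]
  linear_combination t * hd

theorem orthProj_add_smul (hd : dot d d = 1) (p : ℤ × ℤ) (t : ℤ) :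
    orthProj d (p + t • d) = orthProj d p := by
  rw [orthProj, orthProj, dot_add_smul hd, add_smul]
  abel

theorem orthProj_neg (d : ℤ × ℤ) : orthProj (-d) = orthProj d := by
  ext p <;> simp [orthProj, dot] <;> ring

theorem adj_add (hd : d.1.natAbs + d.2.natAbs = 1) (p : ℤ × ℤ) : grid.Adj p (p + d) := by
  show (p.1 - (p + d).1).natAbs + (p.2 - (p + d).2).natAbs = 1
  simpa using hd

theorem add_smul_notMem_of_mem_exposed {s : Finset (ℤ × ℤ)} {p : ℤ × ℤ} (hd : dot d d = 1)
    (hp : p ∈ exposed s d) {t : ℤ} (ht : 0 < t) : p + t • d ∉ s := fun hq => by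
  have := (mem_filter.1 hp).2 _ hq (orthProj_add_smul hd p t)
  rw [dot_add_smul hd] at this
  omega

theorem mk_add_mem_escaping {s : Finset (ℤ × ℤ)} {p : ℤ × ℤ} (hd : d.1.natAbs + d.2.natAbs = 1)
    (hp : p ∈ exposed s d) : (p, p + d) ∈ escaping grid s := by
  have hd' := dot_self_eq_one hd
  have hray := mk_mem_escaping_of_injective_path (G := grid) (W := s)
    (f := fun n : ℕ => p + ((n : ℤ) + 1) • d) (mem_filter.1 hp).1 (by simpa using adj_add hd p)
    (fun m n h => by
      have := congrArg (dot d) h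
      simp only [dot_add_smul hd'] at this
      omega)
    (fun n => add_smul_notMem_of_mem_exposed hd' hp (by positivity))
    (fun n => by
      convert adj_add hd (p + ((n : ℤ) + 1) • d) using 1
      push_cast
      module)
  simpa using hray

theorem card_image_orthProj_le_card_exposed (s : Finset (ℤ × ℤ)) (d : ℤ × ℤ) :
    #(s.image (orthProj d)) ≤ #(exposed s d) :=
  card_image_le_card_filter_forall_le_of_eq s (orthProj d) (dot d)

theorem sum_card_exposed_le_encard_escaping (s D : Finset (ℤ × ℤ))
    (hD : ∀ d ∈ D, d.1.natAbs + d.2.natAbs = 1) :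
    ((∑ d ∈ D, #(exposed s d) : ℕ) : ℕ∞) ≤ (escaping grid s).encard := by
  rw [← card_sigma, ← Set.encard_coe_eq_coe_finsetCard]
  let e : (Σ _ : ℤ × ℤ, ℤ × ℤ) → (ℤ × ℤ) × (ℤ × ℤ) := fun x => (x.2, x.2 + x.1)
  have he : e.Injective := by
    rintro ⟨d, p⟩ ⟨d', p'⟩ h
    simp only [e, Prod.mk.injEq] at h
    obtain ⟨rfl, h⟩ := h
    rw [add_left_cancel h]
  rw [← he.encard_image]
  refine Set.encard_mono ?_
  rintro _ ⟨⟨d, p⟩, hdp, rfl⟩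
  rw [coe_sigma, Set.mem_sigma_iff] at hdp
  exact mk_add_mem_escaping (hD d hdp.1) hdp.2

theorem injOn_orthProj_prod (s : Set (ℤ × ℤ)) :
    s.InjOn fun p => (orthProj (1, 0) p, orthProj (0, 1) p) := by
  intro p _ q _ h
  simp only [orthProj, dot, Prod.ext_iff, Prod.fst_sub, Prod.snd_sub,
    Prod.smul_fst, Prod.smul_snd, smul_eq_mul] at h
  ext <;> omega

end grid

theorem succ_le_two_mul_add_of_ceil_lt {B a b w : ℕ} (hw : w ≤ a * b)
    (h : ⌈(B * (B + 2) : ℚ) / 16⌉₊ < w) : B + 1 ≤ 2 * (a + b) := by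
  have h16 : B * (B + 2) < 16 * w := by
    have := Nat.lt_of_ceil_lt h
    rw [div_lt_iff₀ (by norm_num)] at this
    have : ((B * (B + 2) : ℕ) : ℚ) < (16 * w : ℕ) := by push_cast; linarith
    exact_mod_cast this
  have hamgm : 4 * a * b ≤ (a + b) ^ 2 := four_mul_le_sq_add a b
  by_contra! hlt
  nlinarith

open grid in
theorem grid_expansion_general (B : ℕ) (W : Set (ℤ × ℤ)) (hW : W.Finite)
    (hcard : (⌈(B * (B + 2) : ℚ) / 16⌉₊ : ℕ) < W.ncard) :
    ((B + 1 : ℕ) : ℕ∞) ≤ (escaping grid W).encard := by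
  lift W to Finset (ℤ × ℤ) using hW with s
  rw [Set.ncard_coe_finset] at hcard
  set a := #(s.image (orthProj (1, 0)))
  set b := #(s.image (orthProj (0, 1)))
  have hab : #s ≤ a * b := card_le_card_image_mul_card_image _ _ _ (injOn_orthProj_prod s)
  have hexposed : 2 * (a + b) ≤ ∑ d ∈ {(1, 0), -(1, 0), (0, 1), -(0, 1)}, #(exposed s d) := by
    refine le_of_eq_of_le ?_ (sum_le_sum fun d _ => card_image_orthProj_le_card_exposed s d)
    rw [sum_insert (by decide), sum_insert (by decide), sum_insert (by decide), sum_singleton,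
      orthProj_neg, orthProj_neg]
    ring
  calc ((B + 1 : ℕ) : ℕ∞) ≤ (2 * (a + b) : ℕ) := by
        exact_mod_cast succ_le_two_mul_add_of_ceil_lt hab hcard
    _ ≤ _ := by exact_mod_cast hexposed
    _ ≤ _ := sum_card_exposed_le_encard_escaping s _ (by simp)

/-- The infinite grid satisfies the expansion property with the polynomial bound
`L B = ⌈B * (B + 2) / 16⌉`: every finite connected subgraph with more than `L B`
vertices has at least `B + 1` escaping edges. -/
theorem grid_expansion (B : ℕ) (W : Set (ℤ × ℤ)) (hW : W.Finite)
    (hconn : (grid.induce W).Connected)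
    (hcard : (⌈(B * (B + 2) : ℚ) / 16⌉₊ : ℕ) < W.ncard) :
    ((B + 1 : ℕ) : ℕ∞) ≤ (escaping grid W).encard :=
  grid_expansion_general B W hW hcard
end

section
/- In the infinite grid graph ℤ × ℤ, for any finite set Ṽ of vertices and any budget B, if there exists a finite edge set H with |H| ≤ B such that every vertex of Ṽ lies in a finite connected component of the grid minus H, then each such component has at most ⌈B(B+2)/16⌉ vertices and diameter at most ⌈B(B+2)/16⌉ − 1. -/
/-! Let `C` be the component of `v` in the grid minus `H`. Every grid edge leaving `C` lies in
`H`, so `C` has at most `B` boundary edges. For each of the four unit steps `d`, every line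
parallel to `d` that meets `C` contains a point `p ∈ C` with `p + d ∉ C`; hence, if `C` meets `c`
columns and `r` rows, it has at least `2c + 2r` boundary edges, and
`16 |C| ≤ 16 c r ≤ (2c + 2r)² ≤ B²`. A shortest path inside `C` visits distinct vertices, so
distances in `C` are less than `|C|`. -/

open Finset

def SimpleGraph.edgeBoundary {V : Type*} (G : SimpleGraph V) (S : Set V) : Set (Sym2 V) :=
  {e | ∃ p ∈ S, ∃ q ∉ S, G.Adj p q ∧ s(p, q) = e}

theorem SimpleGraph.edgeBoundary_setOf_reachable_subset {V : Type*} (G : SimpleGraph V)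
    (H : Set (Sym2 V)) (v : V) :
    G.edgeBoundary {y | (G.deleteEdges H).Reachable v y} ⊆ H := by
  rintro _ ⟨p, hp, q, hq, hpq, rfl⟩
  by_contra hpqH
  exact hq <| hp.trans <| SimpleGraph.Adj.reachable <| SimpleGraph.deleteEdges_adj.mpr ⟨hpq, hpqH⟩

theorem SimpleGraph.dist_lt_ncard_setOf_reachable {V : Type*} {G : SimpleGraph V} {v y z : V}
    (hfin : {x | G.Reachable v x}.Finite) (hy : G.Reachable v y) (hz : G.Reachable v z) :
    G.dist y z < {x | G.Reachable v x}.ncard := by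
  classical
  obtain ⟨p, hp, hlen⟩ := (hy.symm.trans hz).exists_path_of_dist
  have hsupp : {x | x ∈ p.support} ⊆ {x | G.Reachable v x} :=
    fun u hu => hy.trans ⟨p.takeUntil u hu⟩
  calc G.dist y z < p.support.length := by rw [← hlen, SimpleGraph.Walk.length_support]; omega
    _ = {x | x ∈ p.support}.ncard := by
      rw [← List.toFinset_card_of_nodup hp.support_nodup, ← Set.ncard_coe_finset]; simp
    _ ≤ _ := Set.ncard_le_ncard hsupp hfin

section ExitEdges

variable {G : Type*} [AddGroup G]

theorem exists_add_nsmul_mem_add_notMem {S : Finset G} {p : G} (hp : p ∈ S) {d : G}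
    (hd : ¬IsOfFinAddOrder d) : ∃ k : ℕ, p + k • d ∈ S ∧ p + k • d + d ∉ S := by
  by_contra! hclosed
  have hmem : ∀ k : ℕ, p + k • d ∈ S := by
    intro k
    induction k with
    | zero => simpa using hp
    | succ k ih => simpa [succ_nsmul, add_assoc] using hclosed k ih
  have hinj : Function.Injective fun k : ℕ => p + k • d :=
    (add_right_injective p).comp (injective_nsmul_iff_not_isOfFinAddOrder.mpr hd)
  exact Set.infinite_range_of_injective hinj (S.finite_toSet.subset (Set.range_subset_iff.mpr hmem))

variable [DecidableEq G]

def exitEdges (S : Finset G) (d : G) : Finset (Sym2 G) :=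
  {p ∈ S | p + d ∉ S}.image fun p => s(p, p + d)

theorem card_exitEdges (S : Finset G) (d : G) : #(exitEdges S d) = #{p ∈ S | p + d ∉ S} := by
  refine card_image_of_injOn fun p hp q hq hpq => ?_
  simp only [coe_filter, Set.mem_ofPred_eq] at hp hq
  rcases Sym2.eq_iff.mp hpq with ⟨h, -⟩ | ⟨rfl, h⟩
  · exact h
  · exact absurd (h ▸ hp.1) hq.2

theorem disjoint_exitEdges (S : Finset G) {d d' : G} (hdd' : d ≠ d') :
    Disjoint (exitEdges S d) (exitEdges S d') := by
  simp only [exitEdges, disjoint_left, mem_image, mem_filter]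
  rintro _ ⟨p, ⟨hp, hpd⟩, rfl⟩ ⟨q, ⟨hq, hqd⟩, hqp⟩
  rcases Sym2.eq_iff.mp hqp with ⟨rfl, h⟩ | ⟨rfl, h⟩
  · exact hdd' (add_left_cancel h).symm
  · exact hpd (h ▸ hq)

theorem card_image_le_card_exitEdges {α : Type*} [DecidableEq α] (S : Finset G) {d : G}
    (hd : ¬IsOfFinAddOrder d) {f : G → α} (hf : ∀ p, f (p + d) = f p) :
    #(S.image f) ≤ #(exitEdges S d) := by
  rw [card_exitEdges]
  refine (card_le_card fun a ha => ?_).trans (card_image_le (f := f))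
  obtain ⟨p, hp, rfl⟩ := mem_image.mp ha
  obtain ⟨k, hk, hkd⟩ := exists_add_nsmul_mem_add_notMem hp hd
  have hfk : ∀ k : ℕ, f (p + k • d) = f p := by
    intro k
    induction k with
    | zero => simp
    | succ k ih => rw [succ_nsmul, ← add_assoc, hf, ih]
  exact mem_image.mpr ⟨p + k • d, mem_filter.mpr ⟨hk, hkd⟩, hfk k⟩

theorem sum_card_exitEdges_le_encard_edgeBoundary {Γ : SimpleGraph G} (S : Finset G)
    {D : Finset G} (hD : ∀ d ∈ D, ∀ p, Γ.Adj p (p + d)) :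
    ((∑ d ∈ D, #(exitEdges S d) : ℕ) : ℕ∞) ≤ (Γ.edgeBoundary S).encard := by
  rw [← card_biUnion fun d _ d' _ h => disjoint_exitEdges S h, ← Set.encard_coe_eq_coe_finsetCard]
  refine Set.encard_mono fun e he => ?_
  obtain ⟨d, hd, he⟩ := mem_biUnion.mp he
  obtain ⟨p, hp, rfl⟩ := mem_image.mp he
  obtain ⟨hpS, hpd⟩ := mem_filter.mp hp
  exact ⟨p, hpS, p + d, hpd, hD d hd p, rfl⟩

end ExitEdges

def gridDirections : Finset (ℤ × ℤ) := {(1, 0), (-1, 0), (0, 1), (0, -1)}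

theorem grid_adj_add : ∀ d ∈ gridDirections, ∀ p, grid.Adj p (p + d) := by
  simp only [gridDirections, mem_insert, mem_singleton]
  rintro d (rfl | rfl | rfl | rfl) p <;> simp [grid]

theorem card_image_fst_add_card_image_snd_le (S : Finset (ℤ × ℤ)) :
    2 * #(S.image Prod.fst) + 2 * #(S.image Prod.snd) ≤
      ∑ d ∈ gridDirections, #(exitEdges S d) := by
  have hd : ∀ d : ℤ × ℤ, d ≠ 0 → ¬IsOfFinAddOrder d :=
    fun _ => not_isOfFinAddOrder_of_isAddTorsionFree
  have h₁ : #(S.image Prod.snd) ≤ #(exitEdges S (1, 0)) :=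
    card_image_le_card_exitEdges S (hd _ (by decide)) (by simp)
  have h₂ : #(S.image Prod.snd) ≤ #(exitEdges S (-1, 0)) :=
    card_image_le_card_exitEdges S (hd _ (by decide)) (by simp)
  have h₃ : #(S.image Prod.fst) ≤ #(exitEdges S (0, 1)) :=
    card_image_le_card_exitEdges S (hd _ (by decide)) (by simp)
  have h₄ : #(S.image Prod.fst) ≤ #(exitEdges S (0, -1)) :=
    card_image_le_card_exitEdges S (hd _ (by decide)) (by simp)
  rw [gridDirections, sum_insert (by decide), sum_insert (by decide), sum_insert (by decide),
    sum_singleton]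
  omega

theorem grid_isoperimetric {S : Set (ℤ × ℤ)} (hS : S.Finite) :
    ((16 * S.ncard : ℕ) : ℕ∞) ≤ (grid.edgeBoundary S).encard ^ 2 := by
  classical
  obtain ⟨S, rfl⟩ := hS.exists_finset_coe
  set c := #(S.image Prod.fst)
  set r := #(S.image Prod.snd)
  have hcr : #S ≤ c * r := card_product _ _ ▸ card_le_card subset_product
  rw [Set.ncard_coe_finset]
  calc ((16 * #S : ℕ) : ℕ∞) ≤ ((2 * c + 2 * r) ^ 2 : ℕ) := by
        exact_mod_cast (by nlinarith [sq_nonneg ((c : ℤ) - r)] : 16 * #S ≤ (2 * c + 2 * r) ^ 2)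
    _ ≤ ((∑ d ∈ gridDirections, #(exitEdges S d) : ℕ) : ℕ∞) ^ 2 := by
        push_cast
        gcongr
        exact_mod_cast card_image_fst_add_card_image_snd_le S
    _ ≤ (grid.edgeBoundary S).encard ^ 2 := by
        gcongr
        exact sum_card_exitEdges_le_encard_edgeBoundary S grid_adj_add

theorem le_ceil_of_sixteen_mul_le_sq {n B : ℕ} (h : 16 * n ≤ B ^ 2) :
    n ≤ ⌈(B * (B + 2) : ℚ) / 16⌉₊ := by
  have hq : (n : ℚ) ≤ (B * (B + 2) : ℚ) / 16 := by
    have : (16 * n : ℚ) ≤ B ^ 2 := by exact_mod_cast h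
    nlinarith [(B.cast_nonneg : (0 : ℚ) ≤ B)]
  exact_mod_cast hq.trans (Nat.le_ceil _)

theorem grid_contained_component_small_general (Vt : Set (ℤ × ℤ)) (B : ℕ)
    (H : Set (Sym2 (ℤ × ℤ))) (hHB : H.encard ≤ B)
    (hfin : ∀ v ∈ Vt, {y : ℤ × ℤ | (grid.deleteEdges H).Reachable v y}.Finite) :
    ∀ v ∈ Vt,
      {y : ℤ × ℤ | (grid.deleteEdges H).Reachable v y}.ncard ≤ ⌈(B * (B + 2) : ℚ) / 16⌉₊ ∧
      ∀ y z : ℤ × ℤ, (grid.deleteEdges H).Reachable v y →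
        (grid.deleteEdges H).Reachable v z →
        (grid.deleteEdges H).dist y z ≤ ⌈(B * (B + 2) : ℚ) / 16⌉₊ - 1 := by
  intro v hv
  have hboundary : (grid.edgeBoundary {y | (grid.deleteEdges H).Reachable v y}).encard ≤ B :=
    (Set.encard_mono (grid.edgeBoundary_setOf_reachable_subset H v)).trans hHB
  have hcard : 16 * {y | (grid.deleteEdges H).Reachable v y}.ncard ≤ B ^ 2 := by
    exact_mod_cast (grid_isoperimetric (hfin v hv)).trans (pow_le_pow_left₀ zero_le hboundary 2)
  have hle := le_ceil_of_sixteen_mul_le_sq hcard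
  refine ⟨hle, fun y z hy hz => ?_⟩
  have hdist := SimpleGraph.dist_lt_ncard_setOf_reachable (hfin v hv) hy hz
  omega

/-- In the infinite grid, if a finite edge set `H` of size at most `B` is such that every
vertex of a finite set `Vt` lies in a finite connected component of the grid minus `H`,
then each such component has at most `⌈B * (B + 2) / 16⌉` vertices and diameter at most
`⌈B * (B + 2) / 16⌉ - 1`. -/
theorem grid_contained_component_small (Vt : Set (ℤ × ℤ)) (hVt : Vt.Finite) (B : ℕ)
    (H : Set (Sym2 (ℤ × ℤ))) (hHB : H.encard ≤ B)
    (hfin : ∀ v ∈ Vt, {y : ℤ × ℤ | (grid.deleteEdges H).Reachable v y}.Finite) :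
    ∀ v ∈ Vt,
      {y : ℤ × ℤ | (grid.deleteEdges H).Reachable v y}.ncard ≤ ⌈(B * (B + 2) : ℚ) / 16⌉₊ ∧
      ∀ y z : ℤ × ℤ, (grid.deleteEdges H).Reachable v y →
        (grid.deleteEdges H).Reachable v z →
        (grid.deleteEdges H).dist y z ≤ ⌈(B * (B + 2) : ℚ) / 16⌉₊ - 1 :=
  grid_contained_component_small_general Vt B H hHB hfin
end
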